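/- arXiv:1604.06655 — 3 statements merged into one kernel-verified Lean document; each statement's English description precedes it below -/
import Mathlib

section
/- Let a ≤ b be integers and let w ∈ ℂ with e^w ≠ 1. Then the exponential lattice sum satisfies the exact Euler–MacLaurin identity ∑_{n=a}^{b} e^{n w} = L(w) · ∫_a^b e^{x w} dx + (e^{a w} + e^{b w})/2, where L(w) = (w/2)/tanh(w/2) and ∫_a^b e^{x w} dx = (e^{b w} − e^{a w})/w. In particular, for every natural number N and every w ∈ ℂ with e^w ≠ 1, the interval character χ(e^w) = ∑_{j=0}^{N} e^{j w} equals L(w) ∫_0^N e^{x w} dx + (1 + e^{N w})/2. -/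
/-!
With `z = e^w`, the sum is the geometric sum `(e^{(b+1)w} - e^{aw}) / (z - 1)`, and
`tanh (w/2) = (z - 1) / (z + 1)`. Hence `L(w) · (e^{bw} - e^{aw}) / w` equals
`(z + 1)(e^{bw} - e^{aw}) / (2 (z - 1))`, and adding the two boundary terms `(e^{aw} + e^{bw}) / 2`
gives back the geometric sum.
-/

namespace Complex

theorem tanh_half_eq (w : ℂ) : tanh (w / 2) = (exp w - 1) / (exp w + 1) := by
  have hsq : exp w = exp (w / 2) * exp (w / 2) := by rw [← exp_add, add_halves]
  have hne := exp_ne_zero (w / 2)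
  rw [tanh_eq_sinh_div_cosh, sinh, cosh, hsq, exp_neg]
  field_simp

/-- At `e^w = -1` both sides vanish, since `tanh (w/2) = 0` there and Lean's `(w/2) / 0 = 0`. -/
theorem half_div_tanh_half_eq (w : ℂ) :
    w / 2 / tanh (w / 2) = w / 2 * ((exp w + 1) / (exp w - 1)) := by
  rw [tanh_half_eq, div_eq_mul_inv, inv_div]

theorem geom_exp_eq_euler_maclaurin {w : ℂ} (hw : exp w ≠ 1) (a b : ℂ) :
    (exp ((b + 1) * w) - exp (a * w)) / (exp w - 1) =
      w / 2 / tanh (w / 2) * ((exp (b * w) - exp (a * w)) / w) +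
        (exp (a * w) + exp (b * w)) / 2 := by
  have hw0 : w ≠ 0 := by rintro rfl; exact hw exp_zero
  have hz : exp w - 1 ≠ 0 := sub_ne_zero.mpr hw
  rw [half_div_tanh_half_eq, add_mul, one_mul, exp_add]
  field_simp
  ring

theorem sum_Icc_exp_int_mul_mul_sub_one {a b : ℤ} (hab : a ≤ b) (w : ℂ) :
    (∑ n ∈ Finset.Icc a b, exp (n * w)) * (exp w - 1) = exp ((b + 1) * w) - exp (a * w) := by
  induction b, hab using Int.leInduction with
  | base => simp [mul_sub, ← exp_add, add_mul]
  | succ b hab ih =>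
    rw [← Finset.insert_Icc_right_eq_Icc_add_one (by omega),
      Finset.sum_insert (by simp), add_mul, ih]
    push_cast
    rw [mul_sub, mul_one, ← exp_add, add_mul (b + 1 : ℂ) 1, one_mul]
    ring

theorem sum_range_exp_nat_mul_mul_sub_one (N : ℕ) (w : ℂ) :
    (∑ j ∈ Finset.range (N + 1), exp (j * w)) * (exp w - 1) = exp ((N + 1) * w) - 1 := by
  simp_rw [exp_nat_mul, geom_sum_mul]
  rw [← exp_nat_mul]
  push_cast
  rfl

theorem integral_exp_ofReal_mul {w : ℂ} (hw : w ≠ 0) (u v : ℝ) :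
    ∫ x : ℝ in u..v, exp (x * w) = (exp (v * w) - exp (u * w)) / w := by
  simpa only [mul_comm w] using integral_exp_mul_complex (a := u) (b := v) hw

end Complex

open Complex

/-- Euler–MacLaurin identity for exponential lattice sums: for integers `a ≤ b` and
`w ∈ ℂ` with `e^w ≠ 1`,
`∑_{n=a}^{b} e^{nw} = L(w) ∫_a^b e^{xw} dx + (e^{aw} + e^{bw})/2` where
`L(w) = (w/2)/tanh(w/2)` and `∫_a^b e^{xw} dx = (e^{bw} - e^{aw})/w`.
In particular the interval character `χ(e^w) = ∑_{j=0}^N e^{jw}` equals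
`L(w) ∫_0^N e^{xw} dx + (1 + e^{Nw})/2`. -/
theorem stmt_0 (a b : ℤ) (hab : a ≤ b) (w : ℂ) (hw : Complex.exp w ≠ 1) :
    (∑ n ∈ Finset.Icc a b, Complex.exp ((n : ℂ) * w)) =
        (w / 2) / Complex.tanh (w / 2) *
            (∫ x : ℝ in (a : ℝ)..(b : ℝ), Complex.exp ((x : ℂ) * w))
          + (Complex.exp ((a : ℂ) * w) + Complex.exp ((b : ℂ) * w)) / 2 ∧
      (∫ x : ℝ in (a : ℝ)..(b : ℝ), Complex.exp ((x : ℂ) * w))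
          = (Complex.exp ((b : ℂ) * w) - Complex.exp ((a : ℂ) * w)) / w ∧
      ∀ N : ℕ, (∑ j ∈ Finset.range (N + 1), Complex.exp ((j : ℂ) * w)) =
        (w / 2) / Complex.tanh (w / 2) *
            (∫ x : ℝ in (0 : ℝ)..(N : ℝ), Complex.exp ((x : ℂ) * w))
          + (1 + Complex.exp ((N : ℂ) * w)) / 2 := by
  have hw0 : w ≠ 0 := by rintro rfl; exact hw exp_zero
  have hz : exp w - 1 ≠ 0 := sub_ne_zero.mpr hw
  refine ⟨?_, integral_exp_ofReal_mul hw0 a b, fun N => ?_⟩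
  · rw [integral_exp_ofReal_mul hw0, eq_div_of_mul_eq hz (sum_Icc_exp_int_mul_mul_sub_one hab w)]
    push_cast
    exact geom_exp_eq_euler_maclaurin hw a b
  · rw [integral_exp_ofReal_mul hw0, eq_div_of_mul_eq hz (sum_range_exp_nat_mul_mul_sub_one N w)]
    simpa using geom_exp_eq_euler_maclaurin hw 0 N
end

section
/- Fix E > 0, β ∈ ℝ and C ≥ 0, let (j_k)_{k ≥ 1} be a sequence of natural numbers with |j_k − k E| ≤ C for all k, and set λ_k = k E e^{2β/√k}. Then lim_{k→∞} √k · (λ_k)^{j_k} e^{−λ_k} / (j_k)! = (2π E)^{−1/2} e^{−2 E β²}. Equivalently, for any m ≥ 1 and z_E ∈ ℂ^m with ‖z_E‖² = E, the Bargmann–Fock equivariant Bergman density at the scaled points z_k = e^{β/√k} z_E satisfies lim_{k→∞} k^{1/2 − m} B_{k,j_k}(z_k) = (2π E)^{−1/2} e^{−2 E β²}. -/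
/-! With `t = (λ - j) / j`, Stirling's formula turns `√j · λ^j e^{-λ} / j!` into
`exp (j (log (1 + t) - t)) / √(2π)` up to a factor tending to `1`, and
`j (log (1 + t) - t) = -(λ - j)² / (2j) + O(j t³)`. For `λ_k = kE e^{2β/√k}` and `|j_k - kE| ≤ C`
one has `λ_k - j_k = 2βE√k + O(1)`, so the exponent tends to `-(2βE)² / (2E) = -2Eβ²`, while
`√(k / j_k) → E^{-1/2}`. The Bargmann–Fock density is the same sequence, because
`‖e^{β/√k} z_E‖² = e^{2β/√k} E`. -/

open Filter Real Topology

lemma abs_log_one_add_sub_add_sq_div_two_le {t : ℝ} (ht : |t| ≤ 1 / 2) :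
    |log (1 + t) - t + t ^ 2 / 2| ≤ 2 * |t| ^ 3 := by
  have h := abs_log_sub_add_sum_range_le (x := -t) (by rw [abs_neg]; linarith) 2
  simp only [Finset.sum_range_succ, Finset.sum_range_zero, abs_neg, sub_neg_eq_add] at h
  calc |log (1 + t) - t + t ^ 2 / 2| ≤ |t| ^ 3 / (1 - |t|) := by
        convert h using 2; push_cast; ring
    _ ≤ |t| ^ 3 / (1 / 2) := by gcongr; linarith
    _ = 2 * |t| ^ 3 := by ring

lemma tendsto_mul_exp_div_sub_one {ι : Type*} {l : Filter ι} {s : ι → ℝ}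
    (hs : Tendsto s l atTop) (a : ℝ) :
    Tendsto (fun i => s i * (exp (a / s i) - 1)) l (𝓝 a) := by
  have h := (tendsto_rpow_sub_one_log (exp_pos a)).comp (tendsto_inv_atTop_nhdsGT_zero.comp hs)
  simp only [log_exp, Function.comp_def, inv_inv, ← exp_mul] at h
  simpa only [div_eq_mul_inv, Function.comp_def] using h

theorem tendsto_mul_log_div_add_sub {ι : Type*} {l : Filter ι} {x y : ι → ℝ} {c : ℝ}
    (hx : Tendsto x l atTop) (hd : Tendsto (fun i => (y i - x i) / √(x i)) l (𝓝 c)) :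
    Tendsto (fun i => x i * log (y i / x i) + x i - y i) l (𝓝 (-(c ^ 2 / 2))) := by
  set d := fun i => (y i - x i) / √(x i)
  have hsqrt : Tendsto (fun i => √(x i)) l atTop := tendsto_sqrt_atTop.comp hx
  have ht : Tendsto (fun i => d i / √(x i)) l (𝓝 0) := hd.div_atTop hsqrt
  have hrem : Tendsto (fun i => 2 * |d i| ^ 3 / √(x i)) l (𝓝 0) :=
    ((hd.abs.pow 3).const_mul 2).div_atTop hsqrt
  -- with `t = (y - x) / x = d / √x`, the expression is `x (log (1 + t) - t)` and `x t² = d²`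
  have hclose : ∀ᶠ i in l,
      |x i * log (y i / x i) + x i - y i + d i ^ 2 / 2| ≤ 2 * |d i| ^ 3 / √(x i) := by
    have ht' : Tendsto (fun i => |d i / √(x i)|) l (𝓝 0) := by simpa using ht.abs
    filter_upwards [hx.eventually_gt_atTop 0,
      ht'.eventually_le_const (by norm_num : (0 : ℝ) < 1 / 2)] with i hxi hti
    set s := √(x i) with hs_def
    have hs : 0 < s := sqrt_pos.2 hxi
    have hxs : x i = s ^ 2 := (sq_sqrt hxi.le).symm
    set t := d i / s
    have hxt : x i * t = y i - x i := by simp only [t, d, ← hs_def]; rw [hxs]; field_simp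
    have hxt2 : x i * t ^ 2 = d i ^ 2 := by simp only [t]; rw [hxs]; field_simp
    have hyx : y i / x i = 1 + t := by field_simp; linarith
    have hexpand : x i * log (y i / x i) + x i - y i + d i ^ 2 / 2
        = x i * (log (1 + t) - t + t ^ 2 / 2) := by
      rw [hyx]; linear_combination hxt - hxt2 / 2
    calc |x i * log (y i / x i) + x i - y i + d i ^ 2 / 2|
        = x i * |log (1 + t) - t + t ^ 2 / 2| := by rw [hexpand, abs_mul, abs_of_pos hxi]
      _ ≤ x i * (2 * |t| ^ 3) := by gcongr; exact abs_log_one_add_sub_add_sq_div_two_le hti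
      _ = 2 * |d i| ^ 3 / s := by
        simp only [t, abs_div, abs_of_pos hs]; rw [hxs]; field_simp
  have hsum : Tendsto (fun i => x i * log (y i / x i) + x i - y i + d i ^ 2 / 2) l (𝓝 0) :=
    squeeze_zero_norm' hclose hrem
  simpa using hsum.sub ((hd.pow 2).div_const 2)

open Nat in
lemma pow_mul_exp_neg_div_factorial_eq {μ : ℝ} (hμ : 0 < μ) {n : ℕ} (hn : 0 < n) :
    μ ^ n * exp (-μ) / n ! =
      exp (n * log (μ / n) + n - μ) / (Stirling.stirlingSeq n * √(2 * n)) := by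
  have hn' : (0 : ℝ) < n := by exact_mod_cast hn
  rw [Stirling.stirlingSeq, sub_eq_add_neg, exp_add, exp_add, exp_nat_mul,
    exp_log (div_pos hμ hn'), div_pow, div_pow, exp_one_pow]
  have : √(2 * n : ℝ) ≠ 0 := by positivity
  field_simp

open Nat in
theorem tendsto_sqrt_mul_poisson {ι : Type*} {l : Filter ι} {n : ι → ℕ} {μ : ι → ℝ} {c : ℝ}
    (hn : Tendsto n l atTop) (hμ : ∀ᶠ i in l, 0 < μ i)
    (hd : Tendsto (fun i => (μ i - n i) / √(n i)) l (𝓝 c)) :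
    Tendsto (fun i => √(n i) * (μ i ^ n i * exp (-μ i) / (n i)!)) l
      (𝓝 (exp (-(c ^ 2 / 2)) / √(2 * π))) := by
  have hG := (continuous_exp.tendsto _).comp
    (tendsto_mul_log_div_add_sub (tendsto_natCast_atTop_iff.2 hn) hd)
  have hS := (Stirling.tendsto_stirlingSeq_sqrt_pi.comp hn).mul_const √2
  rw [show √(2 * π) = √π * √2 by rw [mul_comm, sqrt_mul pi_pos.le]]
  refine (hG.div hS (by positivity)).congr' ?_
  filter_upwards [hμ, hn.eventually_gt_atTop 0] with i hμi hni
  have : (0 : ℝ) < n i := by exact_mod_cast hni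
  rw [pow_mul_exp_neg_div_factorial_eq hμi hni, sqrt_mul zero_le_two]
  simp only [Pi.div_apply, Function.comp_apply]
  field_simp

section ScaledPoisson

variable {E C : ℝ} {j : ℕ → ℕ}

lemma tendsto_sub_mul_div_of_abs_sub_le (hj : ∀ k : ℕ, 1 ≤ k → |(j k : ℝ) - k * E| ≤ C)
    {s : ℕ → ℝ} (hs : Tendsto s atTop atTop) :
    Tendsto (fun k => ((j k : ℝ) - k * E) / s k) atTop (𝓝 0) := by
  simpa only [div_eq_mul_inv, Function.comp_def] using
    bdd_le_mul_tendsto_zero' C (eventually_atTop.2 ⟨1, hj⟩) (tendsto_inv_atTop_zero.comp hs)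

lemma tendsto_div_natCast_of_abs_sub_le (hj : ∀ k : ℕ, 1 ≤ k → |(j k : ℝ) - k * E| ≤ C) :
    Tendsto (fun k => (j k : ℝ) / k) atTop (𝓝 E) := by
  refine (zero_add E ▸ (tendsto_sub_mul_div_of_abs_sub_le hj
    tendsto_natCast_atTop_atTop).add_const E).congr' ?_
  filter_upwards [eventually_gt_atTop 0] with k hk
  have : (k : ℝ) ≠ 0 := by positivity
  field_simp
  ring

lemma tendsto_atTop_of_abs_sub_le (hE : 0 < E)
    (hj : ∀ k : ℕ, 1 ≤ k → |(j k : ℝ) - k * E| ≤ C) : Tendsto j atTop atTop := by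
  refine tendsto_natCast_atTop_iff.1 (((tendsto_div_natCast_of_abs_sub_le hj).pos_mul_atTop hE
    tendsto_natCast_atTop_atTop).congr' ?_)
  filter_upwards [eventually_gt_atTop 0] with k hk
  have : (k : ℝ) ≠ 0 := by positivity
  field_simp

lemma tendsto_mul_exp_sub_div_sqrt_of_abs_sub_le (hE : 0 < E)
    (hj : ∀ k : ℕ, 1 ≤ k → |(j k : ℝ) - k * E| ≤ C) (β : ℝ) :
    Tendsto (fun k : ℕ => ((k : ℝ) * E * exp (2 * β / √k) - j k) / √(j k)) atTop
      (𝓝 (2 * β * √E)) := by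
  have hsqrt : Tendsto (fun k : ℕ => √(k : ℝ)) atTop atTop :=
    tendsto_sqrt_atTop.comp tendsto_natCast_atTop_atTop
  have h := (((tendsto_mul_exp_div_sub_one hsqrt (2 * β)).const_mul E).sub
    (tendsto_sub_mul_div_of_abs_sub_le hj hsqrt)).div
    (tendsto_div_natCast_of_abs_sub_le hj).sqrt (sqrt_ne_zero'.2 hE)
  rw [sub_zero, mul_comm E, mul_div_assoc, div_sqrt] at h
  refine h.congr' ?_
  filter_upwards [eventually_gt_atTop 0, (tendsto_atTop_of_abs_sub_le hE hj).eventually_gt_atTop 0]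
    with k hk hjk
  have hk' : (0 : ℝ) < k := by exact_mod_cast hk
  have hsq : √(k : ℝ) ^ 2 = k := sq_sqrt hk'.le
  simp only [Pi.div_apply, sqrt_div' _ hk'.le]
  have : √(j k : ℝ) ≠ 0 := by positivity
  have : √(k : ℝ) ≠ 0 := by positivity
  field_simp
  rw [hsq]
  ring

theorem tendsto_sqrt_mul_scaled_poisson (hE : 0 < E)
    (hj : ∀ k : ℕ, 1 ≤ k → |(j k : ℝ) - k * E| ≤ C) (β : ℝ) :
    Tendsto (fun k : ℕ => √k * ((k : ℝ) * E * exp (2 * β / √k)) ^ (j k)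
        * exp (-((k : ℝ) * E * exp (2 * β / √k))) / (Nat.factorial (j k) : ℝ))
      atTop (𝓝 (exp (-(2 * E * β ^ 2)) / √(2 * π * E))) := by
  have hpoisson := tendsto_sqrt_mul_poisson (tendsto_atTop_of_abs_sub_le hE hj)
    (eventually_atTop.2 ⟨1, fun k hk => by positivity⟩)
    (tendsto_mul_exp_sub_div_sqrt_of_abs_sub_le hE hj β)
  have hval : exp (-((2 * β * √E) ^ 2 / 2)) / √(2 * π) / √E
      = exp (-(2 * E * β ^ 2)) / √(2 * π * E) := by
    rw [div_div, ← sqrt_mul (by positivity), mul_pow, sq_sqrt hE.le]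
    ring_nf
  rw [← hval]
  refine (hpoisson.div (tendsto_div_natCast_of_abs_sub_le hj).sqrt (sqrt_ne_zero'.2 hE)).congr' ?_
  filter_upwards [eventually_gt_atTop 0, (tendsto_atTop_of_abs_sub_le hE hj).eventually_gt_atTop 0]
    with k hk hjk
  have hk' : (0 : ℝ) < k := by exact_mod_cast hk
  have : √(k : ℝ) ≠ 0 := by positivity
  have : √(j k : ℝ) ≠ 0 := by positivity
  simp only [Pi.div_apply, sqrt_div' _ hk'.le]
  field_simp

end ScaledPoisson

lemma sum_norm_ofReal_exp_mul_sq {m : ℕ} (z : Fin m → ℂ) (r : ℝ) :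
    ∑ i, ‖(exp r : ℂ) * z i‖ ^ 2 = exp (2 * r) * ∑ i, ‖z i‖ ^ 2 := by
  simp only [Finset.mul_sum, norm_mul, Complex.norm_real, norm_of_nonneg (exp_pos r).le, mul_pow,
    ← exp_nat_mul, Nat.cast_ofNat]

theorem stmt_6_general (E : ℝ) (hE : 0 < E) (β : ℝ) (C : ℝ) (j : ℕ → ℕ)
    (hj : ∀ k : ℕ, 1 ≤ k → |(j k : ℝ) - k * E| ≤ C) :
    Filter.Tendsto
        (fun k : ℕ =>
          Real.sqrt k * ((k : ℝ) * E * Real.exp (2 * β / Real.sqrt k)) ^ (j k)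
              * Real.exp (-((k : ℝ) * E * Real.exp (2 * β / Real.sqrt k)))
            / (Nat.factorial (j k) : ℝ))
        Filter.atTop
        (nhds (Real.exp (-(2 * E * β ^ 2)) / Real.sqrt (2 * Real.pi * E))) ∧
      ∀ m : ℕ, 1 ≤ m → ∀ zE : Fin m → ℂ, (∑ i, ‖zE i‖ ^ 2) = E →
        Filter.Tendsto
          (fun k : ℕ =>
            (k : ℝ) ^ ((1 : ℝ) / 2 - m) *
              ((k : ℝ) ^ m *
                  ((k : ℝ) * ∑ i, ‖(Real.exp (β / Real.sqrt k) : ℂ) * zE i‖ ^ 2)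
                      ^ (j k) *
                  Real.exp
                    (-((k : ℝ) *
                        ∑ i, ‖(Real.exp (β / Real.sqrt k) : ℂ) * zE i‖ ^ 2)) /
                (Nat.factorial (j k) : ℝ)))
          Filter.atTop
          (nhds (Real.exp (-(2 * E * β ^ 2)) / Real.sqrt (2 * Real.pi * E))) := by
  have hscaled := tendsto_sqrt_mul_scaled_poisson hE hj β
  refine ⟨hscaled, fun m _ zE hzE => hscaled.congr' ?_⟩
  filter_upwards [eventually_gt_atTop 0] with k hk
  have hpow : (k : ℝ) ^ ((1 : ℝ) / 2 - m) * (k : ℝ) ^ m = √k := by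
    rw [← rpow_natCast, ← rpow_add (by exact_mod_cast hk), sqrt_eq_rpow, sub_add_cancel]
  rw [sum_norm_ofReal_exp_mul_sq, hzE, ← mul_div_assoc, mul_div_assoc', ← mul_assoc,
    ← mul_assoc, hpow]
  ring_nf

/-- √k-scaling asymptotics for the Bargmann–Fock equivariant Bergman density:
for `E > 0`, `β ∈ ℝ`, `C ≥ 0`, natural numbers `j_k` with `|j_k - kE| ≤ C`, and
`λ_k = kE e^{2β/√k}`, one has `√k λ_k^{j_k} e^{-λ_k}/(j_k)! → (2πE)^{-1/2} e^{-2Eβ²}`;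
equivalently, for any `m ≥ 1` and `z_E ∈ ℂ^m` with `‖z_E‖² = E`, at the scaled points
`z_k = e^{β/√k} z_E` one has `k^{1/2-m} B_{k,j_k}(z_k) → (2πE)^{-1/2} e^{-2Eβ²}`. -/
theorem stmt_6 (E : ℝ) (hE : 0 < E) (β : ℝ) (C : ℝ) (hC : 0 ≤ C) (j : ℕ → ℕ)
    (hj : ∀ k : ℕ, 1 ≤ k → |(j k : ℝ) - k * E| ≤ C) :
    Filter.Tendsto
        (fun k : ℕ =>
          Real.sqrt k * ((k : ℝ) * E * Real.exp (2 * β / Real.sqrt k)) ^ (j k)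
              * Real.exp (-((k : ℝ) * E * Real.exp (2 * β / Real.sqrt k)))
            / (Nat.factorial (j k) : ℝ))
        Filter.atTop
        (nhds (Real.exp (-(2 * E * β ^ 2)) / Real.sqrt (2 * Real.pi * E))) ∧
      ∀ m : ℕ, 1 ≤ m → ∀ zE : Fin m → ℂ, (∑ i, ‖zE i‖ ^ 2) = E →
        Filter.Tendsto
          (fun k : ℕ =>
            (k : ℝ) ^ ((1 : ℝ) / 2 - m) *
              ((k : ℝ) ^ m *
                  ((k : ℝ) * ∑ i, ‖(Real.exp (β / Real.sqrt k) : ℂ) * zE i‖ ^ 2)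
                      ^ (j k) *
                  Real.exp
                    (-((k : ℝ) *
                        ∑ i, ‖(Real.exp (β / Real.sqrt k) : ℂ) * zE i‖ ^ 2)) /
                (Nat.factorial (j k) : ℝ)))
          Filter.atTop
          (nhds (Real.exp (-(2 * E * β ^ 2)) / Real.sqrt (2 * Real.pi * E))) :=
  stmt_6_general E hE β C j hj
end

section
/- Fix real numbers 0 < E < r. For each integer k ≥ 1 let j_k = ⌈kE⌉ − 1 (the largest integer strictly less than kE). Then lim_{k→∞} √(2π k E) · (1 − E/r) · (j_k)^{j_k} e^{−j_k} (k r)^{−j_k} · ∑_{j=0}^{j_k} (k r)^j / j! = 1. Equivalently, the Poisson-type partial sum satisfies e^{−kr} ∑_{j=0}^{j_k} (kr)^j/j! = (2πkE)^{−1/2} (1 − E/r)^{−1} e^{−k b_k} (1 + o(1)) as k → ∞, where b_k = r − j_k/k − (j_k/k)·log(kr/j_k). -/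
/-!
Reversing the order of summation,
`∑_{i ≤ j} x^i/i! = (x^j/j!) ∑_{l ≤ j} j(j-1)⋯(j-l+1)/x^l`.
For `x = kr` and `j = j_k ~ kE` the `l`-th term tends to `(E/r)^l` and is dominated by it,
so by Tannery's theorem the sum tends to `(1 - E/r)⁻¹`. Stirling's formula turns
`j^j e^{-j}/j!` into `(2πj)^{-1/2}`, and `√(kE/j) → 1`.
-/

open Filter Finset Real Topology Nat

theorem tendsto_sqrt_mul_pow_mul_exp_div_factorial :
    Tendsto (fun n : ℕ => √(2 * π * n) * (n : ℝ) ^ n * exp (-n) / n !) atTop (𝓝 1) := by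
  have h := (Asymptotics.isEquivalent_iff_tendsto_one (Eventually.of_forall fun n =>
    (Nat.cast_ne_zero.mpr n.factorial_ne_zero : (n ! : ℝ) ≠ 0))).mp
    Stirling.factorial_isEquivalent_stirling.symm
  refine h.congr fun n => ?_
  rw [Pi.div_apply, div_pow, exp_neg, ← exp_nat_mul, mul_one]
  ring_nf

theorem natCast_descFactorial_eq_prod_range {R : Type*} [CommRing R] (n l : ℕ) :
    (n.descFactorial l : R) = ∏ i ∈ range l, ((n : R) - i) := by
  rw [← descPochhammer_eval_eq_descFactorial, descPochhammer_eval_eq_prod_range]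

theorem sum_range_pow_div_factorial_eq {K : Type*} [Field K] [CharZero K] {x : K} (hx : x ≠ 0)
    (n : ℕ) :
    ∑ i ∈ range (n + 1), x ^ i / i ! =
      x ^ n / n ! * ∑ l ∈ range (n + 1), (n.descFactorial l : K) / x ^ l := by
  rw [mul_sum, ← sum_range_reflect]
  refine sum_congr rfl fun l hl => ?_
  have hln : l ≤ n := Nat.lt_succ_iff.mp (mem_range.mp hl)
  have hfac : ((n - l)! : K) * n.descFactorial l = n ! := by
    exact_mod_cast factorial_mul_descFactorial hln
  have hdesc : (n.descFactorial l : K) ≠ 0 := by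
    exact_mod_cast (descFactorial_pos.mpr hln).ne'
  rw [add_tsub_cancel_right, ← hfac, ← pow_sub_mul_pow x hln]
  field_simp

theorem tendsto_sum_descFactorial_div_pow {α : Type*} {L : Filter α} {n : α → ℕ} {x : α → ℝ}
    {q : ℝ} (hq0 : 0 ≤ q) (hq1 : q < 1) (hx : Tendsto x L atTop)
    (hnx : Tendsto (fun a => (n a : ℝ) / x a) L (𝓝 q)) (hle : ∀ᶠ a in L, (n a : ℝ) ≤ q * x a) :
    Tendsto (fun a => ∑ l ∈ range (n a + 1), ((n a).descFactorial l : ℝ) / x a ^ l) L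
      (𝓝 (1 - q)⁻¹) := by
  have hterm (l : ℕ) :
      Tendsto (fun a => ((n a).descFactorial l : ℝ) / x a ^ l) L (𝓝 (q ^ l)) := by
    have hfactor (i : ℕ) : Tendsto (fun a => (n a : ℝ) / x a - i / x a) L (𝓝 q) := by
      simpa using hnx.sub (tendsto_const_nhds.div_atTop hx)
    have hprod := tendsto_finsetProd (range l) fun i _ => hfactor i
    rw [prod_const, card_range] at hprod
    refine hprod.congr fun a => ?_
    simp only [← sub_div]
    rw [prod_div_distrib, prod_const, card_range, natCast_descFactorial_eq_prod_range]
  have hbound : ∀ᶠ a in L, ∀ l, ‖((n a).descFactorial l : ℝ) / x a ^ l‖ ≤ q ^ l := by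
    filter_upwards [hle, hx.eventually_gt_atTop 0] with a ha hxa l
    rw [norm_of_nonneg (by positivity), div_le_iff₀ (by positivity), ← mul_pow]
    calc ((n a).descFactorial l : ℝ) ≤ (n a : ℝ) ^ l := by
          exact_mod_cast (n a).descFactorial_le_pow l
      _ ≤ (q * x a) ^ l := by gcongr
  have hlim := tendsto_tsum_of_dominated_convergence (summable_geometric_of_lt_one hq0 hq1)
    hterm hbound
  rw [tsum_geometric_of_lt_one hq0 hq1] at hlim
  refine hlim.congr fun a => tsum_eq_sum fun l hl => ?_
  rw [descFactorial_eq_zero_iff_lt.mpr (by simpa using hl), Nat.cast_zero, zero_div]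

theorem natCast_ceil_sub_one_le {K : Type*} [Field K] [LinearOrder K] [IsStrictOrderedRing K]
    [FloorSemiring K] {y : K} (hy : 0 ≤ y) : ((⌈y⌉₊ - 1 : ℕ) : K) ≤ y := by
  rcases Nat.eq_zero_or_pos ⌈y⌉₊ with hceil | hceil
  · simpa [hceil] using hy
  · rw [Nat.cast_sub hceil, Nat.cast_one]
    linarith [Nat.ceil_lt_add_one hy]

theorem sub_one_le_natCast_ceil_sub_one {K : Type*} [Field K] [LinearOrder K]
    [IsStrictOrderedRing K] [FloorSemiring K] (y : K) : y - 1 ≤ ((⌈y⌉₊ - 1 : ℕ) : K) := by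
  rcases Nat.eq_zero_or_pos ⌈y⌉₊ with hceil | hceil
  · linarith [Nat.ceil_eq_zero.mp hceil, Nat.cast_nonneg (α := K) (⌈y⌉₊ - 1)]
  · rw [Nat.cast_sub hceil, Nat.cast_one]
    linarith [Nat.le_ceil y]

theorem tendsto_natCast_ceil_mul_sub_one_atTop {E : ℝ} (hE : 0 < E) :
    Tendsto (fun k : ℕ => ⌈k * E⌉₊ - 1) atTop atTop := by
  rw [← tendsto_natCast_atTop_iff (R := ℝ)]
  exact tendsto_atTop_mono (fun k => sub_one_le_natCast_ceil_sub_one _)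
    (tendsto_atTop_add_const_right _ _ (tendsto_natCast_atTop_atTop.atTop_mul_const hE))

theorem tendsto_natCast_ceil_mul_sub_one_div {E : ℝ} (hE : 0 < E) :
    Tendsto (fun k : ℕ => ((⌈k * E⌉₊ - 1 : ℕ) : ℝ) / k) atTop (𝓝 E) := by
  have hlower : Tendsto (fun k : ℕ => E - 1 / (k : ℝ)) atTop (𝓝 E) := by
    simpa using (tendsto_const_nhds (x := E)).sub tendsto_one_div_atTop_nhds_zero_nat
  refine tendsto_of_tendsto_of_tendsto_of_le_of_le' hlower tendsto_const_nhds ?_ ?_ <;>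
    filter_upwards [eventually_gt_atTop 0] with k hk
  · rw [le_div_iff₀ (Nat.cast_pos.mpr hk), sub_mul, one_div_mul_cancel (Nat.cast_pos.mpr hk).ne',
      mul_comm]
    exact sub_one_le_natCast_ceil_sub_one _
  · rw [div_le_iff₀ (Nat.cast_pos.mpr hk), mul_comm]
    exact natCast_ceil_sub_one_le (by positivity)

theorem tendsto_sqrt_mul_div_natCast_ceil_mul_sub_one {E : ℝ} (hE : 0 < E) :
    Tendsto (fun k : ℕ => √(k * E / (⌈k * E⌉₊ - 1 : ℕ))) atTop (𝓝 1) := by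
  have h :=
    ((tendsto_const_nhds (x := E)).div (tendsto_natCast_ceil_mul_sub_one_div hE) hE.ne').sqrt
  simp only [Pi.div_apply, div_self hE.ne', Real.sqrt_one, div_div_eq_mul_div, mul_comm E] at h
  exact h

/-- Forbidden-region asymptotics (Bargmann–Fock instance): for `0 < E < r` and
`j_k = ⌈kE⌉ - 1` (the largest integer strictly less than `kE`),
`√(2πkE) (1 - E/r) j_k^{j_k} e^{-j_k} (kr)^{-j_k} ∑_{j=0}^{j_k} (kr)^j/j! → 1`. -/
theorem stmt_8 (E r : ℝ) (hE : 0 < E) (hEr : E < r) (jk : ℕ → ℕ)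
    (hjk : ∀ k : ℕ, jk k = ⌈(k : ℝ) * E⌉₊ - 1) :
    Filter.Tendsto
      (fun k : ℕ =>
        Real.sqrt (2 * Real.pi * k * E) * (1 - E / r) * (jk k : ℝ) ^ (jk k) *
            Real.exp (-(jk k : ℝ)) / ((k : ℝ) * r) ^ (jk k) *
          ∑ i ∈ Finset.range (jk k + 1), ((k : ℝ) * r) ^ i / (Nat.factorial i : ℝ))
      Filter.atTop (nhds 1) := by
  obtain rfl : jk = fun k : ℕ => ⌈(k : ℝ) * E⌉₊ - 1 := funext hjk
  have hr : 0 < r := hE.trans hEr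
  have hq : E / r < 1 := (div_lt_one hr).mpr hEr
  have hjk_top := tendsto_natCast_ceil_mul_sub_one_atTop hE
  have hsum := tendsto_sum_descFactorial_div_pow (div_nonneg hE.le hr.le) hq
    (tendsto_natCast_atTop_atTop.atTop_mul_const hr)
    (by simpa [div_div] using (tendsto_natCast_ceil_mul_sub_one_div hE).div_const r)
    (Eventually.of_forall fun k => by
      rw [div_mul_eq_mul_div, mul_div_assoc, mul_div_cancel_right₀ _ hr.ne', mul_comm]
      exact natCast_ceil_sub_one_le (by positivity))
  have hsqrt := tendsto_sqrt_mul_div_natCast_ceil_mul_sub_one hE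
  have hstirling := tendsto_sqrt_mul_pow_mul_exp_div_factorial.comp hjk_top
  have hlim := ((hsqrt.mul hstirling).mul_const (1 - E / r)).mul hsum
  rw [one_mul, one_mul, mul_inv_cancel₀ (sub_ne_zero.mpr hq.ne')] at hlim
  refine hlim.congr' ?_
  filter_upwards [eventually_gt_atTop 0, hjk_top.eventually_gt_atTop 0] with k hk hj
  simp only [Function.comp_apply]
  set j := ⌈(k : ℝ) * E⌉₊ - 1
  have hk' : (0 : ℝ) < k := by exact_mod_cast hk
  have hj' : (0 : ℝ) < j := by exact_mod_cast hj
  have hsplit : √(2 * π * k * E) = √(k * E / j) * √(2 * π * j) := by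
    rw [← sqrt_mul (by positivity)]
    congr 1
    field_simp
  rw [sum_range_pow_div_factorial_eq (by positivity), hsplit]
  field_simp
end
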